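/- arXiv:1610.04669 — 2 statements merged into one kernel-verified Lean document; each statement's English description precedes it below -/
import Mathlib

section
/- Let φ : U → ℝ be smooth on an open set U ⊆ ℂⁿ, and set g_{αβ̄} = 2 ∂²φ/∂z_α ∂z̄_β, assumed positive definite. Suppose at x₀ the matrix g is diagonal with entries λ_α and all first derivatives of g vanish. Define S(x₀) = (-2)(2π) Σ_j (1/λ_j) ∂²(log(det g / πⁿ))/∂z_j∂z̄_j (x₀), and R(x₀) = -2 Σ_{j,k} (1/(λ_j λ_k)) ∂⁴φ/∂z_k ∂z̄_j ∂z_j ∂z̄_k (x₀). Then S(x₀) = 4π R(x₀). -/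
/-- The Wirtinger derivative `∂f/∂z_j` of `f : ℂⁿ → ℂ`. -/
noncomputable def wderiv {n : ℕ} (j : Fin n) (f : (Fin n → ℂ) → ℂ)
    (z : Fin n → ℂ) : ℂ :=
  (1 / 2) * (fderiv ℝ f z (Pi.single j 1) -
    Complex.I * fderiv ℝ f z (Pi.single j Complex.I))

/-- The conjugate Wirtinger derivative `∂f/∂z̄_j`. -/
noncomputable def wderivBar {n : ℕ} (j : Fin n) (f : (Fin n → ℂ) → ℂ)
    (z : Fin n → ℂ) : ℂ :=
  (1 / 2) * (fderiv ℝ f z (Pi.single j 1) +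
    Complex.I * fderiv ℝ f z (Pi.single j Complex.I))

open Complex

variable {n : ℕ}
abbrev En (n : ℕ) := Fin n → ℂ

/-- Directional derivative. -/
noncomputable def Dd (v : En n) (f : En n → ℂ) (z : En n) : ℂ := fderiv ℝ f z v

lemma Dd_smooth {f : En n → ℂ} (hf : ContDiff ℝ (⊤ : ℕ∞) f) (v : En n) :
    ContDiff ℝ (⊤ : ℕ∞) (Dd v f) := by
  have h1 : ContDiff ℝ (⊤ : ℕ∞) (fderiv ℝ f) := hf.fderiv_right (by simp)
  exact (ContinuousLinearMap.apply ℝ ℂ v).contDiff.comp h1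

lemma Dd_comm {f : En n → ℂ} (hf : ContDiff ℝ (⊤ : ℕ∞) f) (v w : En n) (z : En n) :
    Dd v (Dd w f) z = Dd w (Dd v f) z := by
  have hd : Differentiable ℝ f := hf.differentiable (by simp)
  have h1 : ContDiff ℝ (⊤ : ℕ∞) (fderiv ℝ f) := hf.fderiv_right (by simp)
  have hx : HasFDerivAt (fderiv ℝ f) (fderiv ℝ (fderiv ℝ f) z) z :=
    (h1.differentiable (by simp) z).hasFDerivAt
  have hsym := second_derivative_symmetric (fun y => (hd y).hasFDerivAt) hx v w
  have ev : ∀ u : En n, Dd u f = fun y => (ContinuousLinearMap.apply ℝ ℂ u) (fderiv ℝ f y) :=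
    fun u => rfl
  have key : ∀ u u' : En n, Dd u (Dd u' f) z = fderiv ℝ (fderiv ℝ f) z u u' := by
    intro u u'
    show fderiv ℝ (Dd u' f) z u = _
    rw [ev u']
    rw [show (fun y => (ContinuousLinearMap.apply ℝ ℂ u') (fderiv ℝ f y)) =
        (ContinuousLinearMap.apply ℝ ℂ u') ∘ (fderiv ℝ f) from rfl,
      fderiv_comp (𝕜 := ℝ) z ((ContinuousLinearMap.apply ℝ ℂ u').differentiableAt)
        (h1.differentiable (by simp) z)]
    simp [ContinuousLinearMap.fderiv]
  rw [key, key]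
  exact hsym

section lemmas
variable {f u t : En n → ℂ} {z : En n} {a b : ℂ} {j k : Fin n} {v w : En n}

lemma Dd_lin (hu : DifferentiableAt ℝ u z) (ht : DifferentiableAt ℝ t z) :
    Dd v (fun y => a * u y + b * t y) z = a * Dd v u z + b * Dd v t z := by
  unfold Dd
  have h1 : (fun y => a * u y + b * t y) = fun y => a • u y + b • t y := by
    simp [smul_eq_mul]
  rw [h1, fderiv_fun_add (f := fun y => a • u y) (g := fun y => b • t y)
      ((hu.const_smul a)) ((ht.const_smul b)),
    fderiv_fun_const_smul hu, fderiv_fun_const_smul ht]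
  simp [smul_eq_mul]

lemma smooth_comb (hu : ContDiff ℝ (⊤ : ℕ∞) u) (ht : ContDiff ℝ (⊤ : ℕ∞) t) :
    ContDiff ℝ (⊤ : ℕ∞) (fun z => a * u z + b * t z) :=
  ((contDiff_const.mul hu).add (contDiff_const.mul ht))

lemma wderiv_eq_comb (j : Fin n) (f : En n → ℂ) :
    wderiv j f = fun z => (1/2 : ℂ) * Dd (Pi.single j 1) f z +
      (-(Complex.I/2)) * Dd (Pi.single j Complex.I) f z := by
  funext z; unfold wderiv Dd; ring

lemma wderivBar_eq_comb (j : Fin n) (f : En n → ℂ) :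
    wderivBar j f = fun z => (1/2 : ℂ) * Dd (Pi.single j 1) f z +
      (Complex.I/2) * Dd (Pi.single j Complex.I) f z := by
  funext z; unfold wderivBar Dd; ring

lemma wderiv_smooth (hf : ContDiff ℝ (⊤ : ℕ∞) f) : ContDiff ℝ (⊤ : ℕ∞) (wderiv j f) := by
  rw [wderiv_eq_comb]; exact smooth_comb (Dd_smooth hf _) (Dd_smooth hf _)

lemma wderivBar_smooth (hf : ContDiff ℝ (⊤ : ℕ∞) f) : ContDiff ℝ (⊤ : ℕ∞) (wderivBar j f) := by
  rw [wderivBar_eq_comb]; exact smooth_comb (Dd_smooth hf _) (Dd_smooth hf _)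

lemma wderiv_lin (hu : DifferentiableAt ℝ u z) (ht : DifferentiableAt ℝ t z) :
    wderiv j (fun y => a * u y + b * t y) z = a * wderiv j u z + b * wderiv j t z := by
  simp only [wderiv_eq_comb]
  rw [Dd_lin hu ht, Dd_lin hu ht]; ring

lemma wderivBar_lin (hu : DifferentiableAt ℝ u z) (ht : DifferentiableAt ℝ t z) :
    wderivBar j (fun y => a * u y + b * t y) z = a * wderivBar j u z + b * wderivBar j t z := by
  simp only [wderivBar_eq_comb]
  rw [Dd_lin hu ht, Dd_lin hu ht]; ring

lemma Dd_wderiv_comm (hf : ContDiff ℝ (⊤ : ℕ∞) f) :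
    Dd v (wderiv j f) z = wderiv j (Dd v f) z := by
  conv_lhs => rw [wderiv_eq_comb]
  rw [Dd_lin ((Dd_smooth hf _).differentiable (by simp) z)
    ((Dd_smooth hf _).differentiable (by simp) z),
    Dd_comm hf v (Pi.single j 1), Dd_comm hf v (Pi.single j Complex.I),
    wderiv_eq_comb]

lemma Dd_wderivBar_comm (hf : ContDiff ℝ (⊤ : ℕ∞) f) :
    Dd v (wderivBar j f) z = wderivBar j (Dd v f) z := by
  conv_lhs => rw [wderivBar_eq_comb]
  rw [Dd_lin ((Dd_smooth hf _).differentiable (by simp) z)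
    ((Dd_smooth hf _).differentiable (by simp) z),
    Dd_comm hf v (Pi.single j 1), Dd_comm hf v (Pi.single j Complex.I),
    wderivBar_eq_comb]

lemma wderiv_wderiv_comm (hf : ContDiff ℝ (⊤ : ℕ∞) f) :
    wderiv j (wderiv k f) z = wderiv k (wderiv j f) z := by
  conv_lhs => rw [wderiv_eq_comb k f]
  rw [wderiv_lin ((Dd_smooth hf _).differentiable (by simp) z)
    ((Dd_smooth hf _).differentiable (by simp) z),
    ← Dd_wderiv_comm hf, ← Dd_wderiv_comm hf, wderiv_eq_comb k (wderiv j f)]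

lemma wderiv_wderivBar_comm (hf : ContDiff ℝ (⊤ : ℕ∞) f) :
    wderiv j (wderivBar k f) z = wderivBar k (wderiv j f) z := by
  conv_lhs => rw [wderivBar_eq_comb k f]
  rw [wderiv_lin ((Dd_smooth hf _).differentiable (by simp) z)
    ((Dd_smooth hf _).differentiable (by simp) z),
    ← Dd_wderiv_comm hf, ← Dd_wderiv_comm hf, wderivBar_eq_comb k (wderiv j f)]

end lemmas

section lemmas2
variable {f u t : En n → ℂ} {z : En n} {a b c : ℂ} {j k : Fin n} {v w : En n}

lemma wderiv_const (j : Fin n) (c : ℂ) (z : En n) :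
    wderiv j (fun _ => c) z = 0 := by
  unfold wderiv; rw [fderiv_fun_const]; simp

lemma wderivBar_const (j : Fin n) (c : ℂ) (z : En n) :
    wderivBar j (fun _ => c) z = 0 := by
  unfold wderivBar; rw [fderiv_fun_const]; simp

lemma wderiv_const_mul (hu : DifferentiableAt ℝ u z) (c : ℂ) :
    wderiv j (fun y => c * u y) z = c * wderiv j u z := by
  have h1 : (fun y => c * u y) = fun y => c * u y + (0 : ℂ) * u y := by
    funext y; ring
  rw [h1, wderiv_lin hu hu]; ring

lemma wderivBar_const_mul (hu : DifferentiableAt ℝ u z) (c : ℂ) :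
    wderivBar j (fun y => c * u y) z = c * wderivBar j u z := by
  have h1 : (fun y => c * u y) = fun y => c * u y + (0 : ℂ) * u y := by
    funext y; ring
  rw [h1, wderivBar_lin hu hu]; ring

lemma wderiv_mul (hu : DifferentiableAt ℝ u z) (ht : DifferentiableAt ℝ t z) :
    wderiv j (fun y => u y * t y) z = u z * wderiv j t z + t z * wderiv j u z := by
  unfold wderiv
  rw [fderiv_fun_mul hu ht]
  simp only [ContinuousLinearMap.add_apply, ContinuousLinearMap.smul_apply, smul_eq_mul]
  ring

lemma wderivBar_mul (hu : DifferentiableAt ℝ u z) (ht : DifferentiableAt ℝ t z) :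
    wderivBar j (fun y => u y * t y) z = u z * wderivBar j t z + t z * wderivBar j u z := by
  unfold wderivBar
  rw [fderiv_fun_mul hu ht]
  simp only [ContinuousLinearMap.add_apply, ContinuousLinearMap.smul_apply, smul_eq_mul]
  ring

lemma wderiv_sum {ι : Type*} (s : Finset ι) (F : ι → En n → ℂ)
    (hF : ∀ i ∈ s, DifferentiableAt ℝ (F i) z) :
    wderiv j (fun y => ∑ i ∈ s, F i y) z = ∑ i ∈ s, wderiv j (F i) z := by
  unfold wderiv
  rw [fderiv_fun_sum hF]
  simp only [ContinuousLinearMap.sum_apply]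
  rw [Finset.mul_sum, ← Finset.sum_sub_distrib, Finset.mul_sum]

lemma wderivBar_sum {ι : Type*} (s : Finset ι) (F : ι → En n → ℂ)
    (hF : ∀ i ∈ s, DifferentiableAt ℝ (F i) z) :
    wderivBar j (fun y => ∑ i ∈ s, F i y) z = ∑ i ∈ s, wderivBar j (F i) z := by
  unfold wderivBar
  rw [fderiv_fun_sum hF]
  simp only [ContinuousLinearMap.sum_apply]
  rw [Finset.mul_sum, ← Finset.sum_add_distrib, Finset.mul_sum]

end lemmas2

section lemmas3
variable {f f₂ u t : En n → ℂ} {x z : En n} {a b c : ℂ} {j k : Fin n} {v w : En n}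

lemma wderivBar_prod {ι : Type*} [DecidableEq ι] (s : Finset ι) (F : ι → En n → ℂ)
    (hF : ∀ i ∈ s, DifferentiableAt ℝ (F i) z) :
    wderivBar j (fun y => ∏ i ∈ s, F i y) z =
      ∑ i ∈ s, (∏ l ∈ s.erase i, F l z) * wderivBar j (F i) z := by
  have h := HasFDerivAt.finset_prod (fun i hi => (hF i hi).hasFDerivAt)
  unfold wderivBar
  rw [h.fderiv]
  simp only [ContinuousLinearMap.sum_apply, ContinuousLinearMap.smul_apply, smul_eq_mul]
  rw [Finset.mul_sum, ← Finset.sum_add_distrib, Finset.mul_sum]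
  exact Finset.sum_congr rfl fun i _ => by ring

lemma wderiv_congr (h : f =ᶠ[nhds x] f₂) : wderiv j f x = wderiv j f₂ x := by
  unfold wderiv; rw [h.fderiv_eq]

lemma wderivBar_zero_of_fderiv_zero (h : fderiv ℝ f x = 0) : wderivBar j f x = 0 := by
  unfold wderivBar; rw [h]; simp

lemma wderiv_zero_of_fderiv_zero (h : fderiv ℝ f x = 0) : wderiv j f x = 0 := by
  unfold wderiv; rw [h]; simp

end lemmas3

set_option maxHeartbeats 1000000 in
/-- Let `φ` be smooth and real-valued, `g_{αβ̄} = 2 ∂²φ/∂z_α∂z̄_β`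
positive definite; assume at `x₀` that `g` is diagonal with entries `λ_α` and all
first derivatives of `g` vanish. Then with
`S(x₀) = (-2)(2π) ∑_j (1/λ_j) ∂²(log(det g/πⁿ))/∂z_j∂z̄_j(x₀)` and
`R(x₀) = -2 ∑_{j,k} (1/(λ_jλ_k)) ∂⁴φ/∂z_k∂z̄_j∂z_j∂z̄_k(x₀)`, one has
`S(x₀) = 4π R(x₀)`. -/
theorem stmt_9 {n : ℕ} (φ : (Fin n → ℂ) → ℝ) (hφ : ContDiff ℝ (⊤ : ℕ∞) φ)
    (g : (Fin n → ℂ) → Matrix (Fin n) (Fin n) ℂ)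
    (hgdef : ∀ z (α β : Fin n),
      g z α β = 2 * wderiv α (fun z' => wderivBar β (fun w => ((φ w : ℝ) : ℂ)) z') z)
    (hposdef : ∀ z (x : Fin n → ℂ), x ≠ 0 →
      0 < (dotProduct (star x) (Matrix.mulVec (g z) x)).re)
    (x₀ : Fin n → ℂ) (lam : Fin n → ℝ) (hlam : ∀ α, 0 < lam α)
    (hdiag : g x₀ = Matrix.diagonal fun α => (lam α : ℂ))
    (hfirst : ∀ α β : Fin n, fderiv ℝ (fun z => g z α β) x₀ = 0) :
    (-2 : ℂ) * (2 * Real.pi) * ∑ j : Fin n, (1 / (lam j : ℂ)) *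
        wderiv j (fun z => wderivBar j
          (fun w => Complex.log ((g w).det / (Real.pi : ℂ) ^ n)) z) x₀ =
      4 * (Real.pi : ℂ) * ((-2 : ℂ) * ∑ j : Fin n, ∑ k : Fin n,
        (1 / ((lam j : ℂ) * (lam k : ℂ))) *
          wderiv k (fun z₁ => wderivBar j (fun z₂ => wderiv j
            (fun z₃ => wderivBar k (fun w => ((φ w : ℝ) : ℂ)) z₃) z₂) z₁) x₀) := by
  classical
  set F : En n → ℂ := fun w => ((φ w : ℝ) : ℂ) with hFdef
  have hF : ContDiff ℝ (⊤ : ℕ∞) F := Complex.ofRealCLM.contDiff.comp hφ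
  set c : ℂ := ((Real.pi : ℂ) ^ n)⁻¹ with hcdef
  have hπpos : (0 : ℝ) < Real.pi ^ n := pow_pos Real.pi_pos n
  have hπne : ((Real.pi : ℂ)) ^ n ≠ 0 :=
    pow_ne_zero _ (by exact_mod_cast Real.pi_ne_zero)
  have hcne : c ≠ 0 := by simp [hcdef, hπne]
  set P : En n → ℂ := fun z => ∑ σ : Equiv.Perm (Fin n),
      ((Equiv.Perm.sign σ : ℤ) : ℂ) * ∏ i, g z (σ i) i with hPdef
  set D : En n → ℂ := fun z => c * P z with hDdef
  have hPdet : ∀ z, (g z).det = P z := by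
    intro z
    rw [Matrix.det_apply']
  have hGsm : ∀ α β : Fin n, ContDiff ℝ (⊤ : ℕ∞) (fun z => g z α β) := by
    intro α β
    have h1 : (fun z => g z α β) = fun z => 2 * wderiv α (wderivBar β F) z :=
      funext fun z => hgdef z α β
    rw [h1]
    exact contDiff_const.mul (wderiv_smooth (wderivBar_smooth hF))
  have hprod_sm : ∀ (σ : Equiv.Perm (Fin n)) (s : Finset (Fin n)),
      ContDiff ℝ (⊤ : ℕ∞) (fun z => ∏ i ∈ s, g z (σ i) i) :=
    fun σ s => contDiff_prod fun i _ => hGsm (σ i) i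
  have hP_sm : ContDiff ℝ (⊤ : ℕ∞) P := ContDiff.sum fun σ _ =>
    contDiff_const.mul (hprod_sm σ Finset.univ)
  have hD_sm : ContDiff ℝ (⊤ : ℕ∞) D := contDiff_const.mul hP_sm
  have hgzero : ∀ (α β jj : Fin n), wderivBar jj (fun z => g z α β) x₀ = 0 :=
    fun α β jj => wderivBar_zero_of_fderiv_zero (hfirst α β)
  have hgzero' : ∀ (α β jj : Fin n), wderiv jj (fun z => g z α β) x₀ = 0 :=
    fun α β jj => wderiv_zero_of_fderiv_zero (hfirst α β)
  have hDx₀ : D x₀ = c * ∏ i, (lam i : ℂ) := by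
    have : P x₀ = ∏ i, (lam i : ℂ) := by
      rw [← hPdet x₀, hdiag, Matrix.det_diagonal]
    simp only [hDdef, this]
  -- continue
  -- value of Q-terms
  have key1 : ∀ j : Fin n,
      wderiv j (fun z => wderivBar j
          (fun w => Complex.log ((g w).det / (Real.pi : ℂ) ^ n)) z) x₀ =
        ∑ i : Fin n, ((lam i : ℂ))⁻¹ *
          wderiv j (wderivBar j (fun y => g y i i)) x₀ := by
    intro j
    show wderiv j (wderivBar j
          (fun w => Complex.log ((g w).det / (Real.pi : ℂ) ^ n))) x₀ = _
    have hlog : (fun w => Complex.log ((g w).det / (Real.pi : ℂ) ^ n)) =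
        fun w => Complex.log (D w) := by
      funext w
      congr 1
      rw [hPdet w, hDdef, hcdef, div_eq_mul_inv, mul_comm]
    rw [hlog]
    have hmem : D x₀ ∈ Complex.slitPlane := by
      rw [hDx₀]
      have h2 : c * ∏ i, ((lam i : ℝ) : ℂ) =
          (((Real.pi ^ n)⁻¹ * ∏ i, lam i : ℝ) : ℂ) := by
        push_cast [hcdef]
        ring
      rw [h2]
      refine Complex.ofReal_mem_slitPlane.2 ?_
      have := Finset.prod_pos (fun i (_ : i ∈ Finset.univ) => hlam i)
      positivity
    have hDne : D x₀ ≠ 0 := Complex.slitPlane_ne_zero hmem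
    have ev : ∀ᶠ z in nhds x₀, D z ∈ Complex.slitPlane :=
      (hD_sm.continuous.continuousAt).eventually
        (Complex.isOpen_slitPlane.eventually_mem hmem)
    have e1 : wderivBar j (fun w => Complex.log (D w)) =ᶠ[nhds x₀]
        fun z => (D z)⁻¹ * wderivBar j D z := by
      filter_upwards [ev] with z hz
      have hfd : HasFDerivAt (fun w => Complex.log (D w))
          ((D z)⁻¹ • fderiv ℝ D z) z :=
        (Complex.hasDerivAt_log hz).comp_hasFDerivAt z
          ((hD_sm.differentiable (by simp) z).hasFDerivAt)
      show wderivBar j (fun w => Complex.log (D w)) z = _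
      unfold wderivBar
      rw [hfd.fderiv]
      simp only [ContinuousLinearMap.smul_apply, smul_eq_mul]
      ring
    rw [wderiv_congr e1]
    -- B-function formula
    have hBfun : wderivBar j D = fun z => c * ∑ σ : Equiv.Perm (Fin n),
        ((Equiv.Perm.sign σ : ℤ) : ℂ) * ∑ i : Fin n,
          (∏ l ∈ Finset.univ.erase i, g z (σ l) l) *
            wderivBar j (fun y => g y (σ i) i) z := by
      funext z
      have h1 : wderivBar j D z = c * wderivBar j P z := by
        rw [hDdef]
        exact wderivBar_const_mul (hP_sm.differentiable (by simp) z) c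
      rw [h1]
      congr 1
      rw [hPdef]
      rw [wderivBar_sum Finset.univ _ (fun σ _ =>
        ((contDiff_const.mul (hprod_sm σ Finset.univ)).differentiable (by simp) z))]
      refine Finset.sum_congr rfl fun σ _ => ?_
      rw [wderivBar_const_mul ((hprod_sm σ Finset.univ).differentiable (by simp) z)]
      congr 1
      exact wderivBar_prod Finset.univ _ (fun i _ =>
        ((hGsm (σ i) i).differentiable (by simp) z))
    -- product rule at x₀
    have hinv : DifferentiableAt ℝ (fun z => (D z)⁻¹) x₀ :=
      (hD_sm.differentiable (by simp) x₀).inv hDne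
    have hBsm : ContDiff ℝ (⊤ : ℕ∞) (wderivBar j D) := wderivBar_smooth hD_sm
    rw [wderiv_mul (u := fun z => (D z)⁻¹) (t := wderivBar j D) hinv
      (hBsm.differentiable (by simp) x₀)]
    have hB0 : wderivBar j D x₀ = 0 := by
      rw [hBfun]
      simp only [hgzero, mul_zero, Finset.sum_const_zero]
    rw [hB0, zero_mul, add_zero]
    -- second derivative of D at x₀
    have hS_sm : ∀ σ : Equiv.Perm (Fin n), ContDiff ℝ (⊤ : ℕ∞) (fun z =>
        ∑ i : Fin n, (∏ l ∈ Finset.univ.erase i, g z (σ l) l) *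
          wderivBar j (fun y => g y (σ i) i) z) := fun σ =>
      ContDiff.sum fun i _ =>
        (hprod_sm σ _).mul (wderivBar_smooth (hGsm (σ i) i))
    have hB1 : wderiv j (wderivBar j D) x₀ = c * ∑ i : Fin n,
        (∏ l ∈ Finset.univ.erase i, (lam l : ℂ)) *
          wderiv j (wderivBar j (fun y => g y i i)) x₀ := by
      rw [hBfun]
      rw [wderiv_const_mul ((ContDiff.sum fun σ _ =>
        contDiff_const.mul (hS_sm σ)).differentiable (by simp) x₀) c]
      congr 1
      rw [wderiv_sum Finset.univ _ (fun σ _ =>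
        (contDiff_const.mul (hS_sm σ)).differentiable (by simp) x₀)]
      rw [Finset.sum_eq_single_of_mem (1 : Equiv.Perm (Fin n))
        (Finset.mem_univ _) ?zero]
      case zero =>
        intro σ _ hσ
        rw [wderiv_const_mul ((hS_sm σ).differentiable (by simp) x₀)]
        rw [wderiv_sum Finset.univ _ (fun i _ =>
          ((hprod_sm σ _).mul (wderivBar_smooth (hGsm (σ i) i))).differentiable
            (by simp) x₀)]
        have hterm : ∀ i : Fin n, wderiv j (fun z =>
            (∏ l ∈ Finset.univ.erase i, g z (σ l) l) *
              wderivBar j (fun y => g y (σ i) i) z) x₀ = 0 := by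
          intro i
          rw [wderiv_mul ((hprod_sm σ (Finset.univ.erase i)).differentiable
              (by simp) x₀)
            ((wderivBar_smooth (hGsm (σ i) i)).differentiable (by simp) x₀)]
          rw [hgzero (σ i) i j, zero_mul, add_zero]
          -- the product over erase i at x₀ is zero since σ ≠ 1
          obtain ⟨l, hl, hlne⟩ : ∃ l, l ≠ i ∧ σ l ≠ l := by
            obtain ⟨m, hm⟩ : ∃ m, σ m ≠ m := by
              by_contra hcon
              push_neg at hcon
              exact hσ (Equiv.ext fun m => (hcon m).trans rfl)
            by_cases hmi : m = i
            · subst hmi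
              refine ⟨σ m, fun hc => hm ?_, fun hc => hm (σ.injective hc)⟩
              · rw [hc]
            · exact ⟨m, hmi, hm⟩
          have hzero : g x₀ (σ l) l = 0 := by
            rw [hdiag]
            exact Matrix.diagonal_apply_ne _ hlne
          have hp0 : (∏ l ∈ Finset.univ.erase i, g x₀ (σ l) l) = 0 :=
            Finset.prod_eq_zero (Finset.mem_erase.2 ⟨hl, Finset.mem_univ l⟩)
              hzero
          rw [hp0, zero_mul]
        simp only [hterm, Finset.sum_const_zero, mul_zero]
      · rw [wderiv_const_mul ((hS_sm 1).differentiable (by simp) x₀)]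
        simp only [Equiv.Perm.sign_one, Units.val_one, Int.cast_one, one_mul,
          Equiv.Perm.one_apply]
        rw [wderiv_sum Finset.univ (fun i => fun z =>
            (∏ l ∈ Finset.univ.erase i, g z l l) *
              wderivBar j (fun y => g y i i) z) (fun i _ =>
          ((contDiff_prod (fun l _ => hGsm l l)).mul
            (wderivBar_smooth (hGsm i i))).differentiable (by simp) x₀)]
        refine Finset.sum_congr rfl fun i _ => ?_
        rw [wderiv_mul (u := fun z => ∏ l ∈ Finset.univ.erase i, g z l l)
          (t := fun z => wderivBar j (fun y => g y i i) z)
          ((contDiff_prod (fun l _ => hGsm l l)).differentiable (by simp) x₀)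
          ((wderivBar_smooth (hGsm i i)).differentiable (by simp) x₀)]
        rw [hgzero i i j, zero_mul, add_zero]
        have hprodval : (∏ l ∈ Finset.univ.erase i, g x₀ l l) =
            ∏ l ∈ Finset.univ.erase i, (lam l : ℂ) := by
          refine Finset.prod_congr rfl fun l _ => ?_
          rw [hdiag]
          exact Matrix.diagonal_apply_eq _ l
        rw [hprodval]
    rw [hB1, hDx₀, Finset.mul_sum, Finset.mul_sum]
    refine Finset.sum_congr rfl fun i _ => ?_
    have hps : (∏ l, (lam l : ℂ)) =
        (lam i : ℂ) * ∏ l ∈ Finset.univ.erase i, (lam l : ℂ) :=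
      (Finset.mul_prod_erase _ _ (Finset.mem_univ i)).symm
    have hlne : (lam i : ℂ) ≠ 0 := by
      exact_mod_cast ne_of_gt (hlam i)
    have hpe : (∏ l ∈ Finset.univ.erase i, (lam l : ℂ)) ≠ 0 :=
      Finset.prod_ne_zero_iff.2 fun l _ => by
        exact_mod_cast ne_of_gt (hlam l)
    rw [hps]
    field_simp
  -- final assembly
  have hsmW : ContDiff ℝ (⊤ : ℕ∞) (fun w : En n => ((φ w : ℝ) : ℂ)) := hF
  have key2 : ∀ (i jj : Fin n),
      wderiv jj (wderivBar jj (fun y => g y i i)) x₀ =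
        2 * wderiv jj (wderivBar jj (wderiv i (wderivBar i F))) x₀ := by
    intro i jj
    have h1 : (fun y => g y i i) = fun y => 2 * wderiv i (wderivBar i F) y :=
      funext fun y => hgdef y i i
    rw [h1]
    have hsm : ContDiff ℝ (⊤ : ℕ∞) (wderiv i (wderivBar i F)) :=
      wderiv_smooth (wderivBar_smooth hF)
    have h2 : wderivBar jj (fun y => 2 * wderiv i (wderivBar i F) y) =
        fun z => 2 * wderivBar jj (wderiv i (wderivBar i F)) z :=
      funext fun z => wderivBar_const_mul (hsm.differentiable (by simp) z) 2
    rw [h2]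
    exact wderiv_const_mul
      ((wderivBar_smooth hsm).differentiable (by simp) x₀) 2
  have key3 : ∀ jj kk : Fin n,
      wderiv kk (fun z₁ => wderivBar jj (fun z₂ => wderiv jj
        (fun z₃ => wderivBar kk F z₃) z₂) z₁) x₀ =
      wderiv jj (wderivBar jj (wderiv kk (wderivBar kk F))) x₀ := by
    intro jj kk
    show wderiv kk (wderivBar jj (wderiv jj (wderivBar kk F))) x₀ = _
    have hkF : ContDiff ℝ (⊤ : ℕ∞) (wderivBar kk F) := wderivBar_smooth hF
    have e1 : wderivBar jj (wderiv jj (wderivBar kk F)) =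
        wderiv jj (wderivBar jj (wderivBar kk F)) :=
      funext fun z => (wderiv_wderivBar_comm hkF).symm
    rw [e1, wderiv_wderiv_comm (wderivBar_smooth (wderivBar_smooth hF))]
    have e2 : wderiv kk (wderivBar jj (wderivBar kk F)) =
        wderivBar jj (wderiv kk (wderivBar kk F)) :=
      funext fun z => wderiv_wderivBar_comm hkF
    rw [e2]
  have hL : (∑ j : Fin n, (1 / (lam j : ℂ)) *
      wderiv j (fun z => wderivBar j
        (fun w => Complex.log ((g w).det / (Real.pi : ℂ) ^ n)) z) x₀) =
      ∑ j : Fin n, ∑ i : Fin n, (1 / (lam j : ℂ)) * ((lam i : ℂ))⁻¹ *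
        (2 * wderiv j (wderivBar j (wderiv i (wderivBar i F))) x₀) := by
    refine Finset.sum_congr rfl fun j _ => ?_
    rw [key1 j, Finset.mul_sum]
    refine Finset.sum_congr rfl fun i _ => ?_
    rw [key2 i j]
    ring
  have hR : (∑ j : Fin n, ∑ k : Fin n,
      (1 / ((lam j : ℂ) * (lam k : ℂ))) *
        wderiv k (fun z₁ => wderivBar j (fun z₂ => wderiv j
          (fun z₃ => wderivBar k F z₃) z₂) z₁) x₀) =
      ∑ j : Fin n, ∑ k : Fin n, (1 / ((lam j : ℂ) * (lam k : ℂ))) *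
        wderiv j (wderivBar j (wderiv k (wderivBar k F))) x₀ := by
    refine Finset.sum_congr rfl fun j _ => ?_
    refine Finset.sum_congr rfl fun k _ => ?_
    rw [key3 j k]
  rw [hL, hR, Finset.mul_sum, Finset.mul_sum, Finset.mul_sum]
  refine Finset.sum_congr rfl fun j _ => ?_
  rw [Finset.mul_sum, Finset.mul_sum, Finset.mul_sum]
  refine Finset.sum_congr rfl fun i _ => ?_
  rw [one_div, one_div, mul_inv]
  ring
end

section
/- Let T be a densely defined skew-adjoint operator on a Hilbert space L² with Tu = imu on a closed subspace L²_m, and let □ be a nonnegative self-adjoint operator commuting with T on L²_m. Suppose a Gårding-type inequality ‖v‖_{s+2} ≤ C_s m^{N_s}(‖(□ - T²)v‖_s + ‖v‖_s) holds for all v in the range of the kernel projection S of □ restricted to L²_m, where ‖·‖_s are Sobolev norms, with constants independent of m. If T²Sv = -m²Sv and ‖Sv‖ ≤ ‖v‖ for all v ∈ L², then for every s ∈ ℕ₀ there are constants C'_s, N'_s independent of m with ‖Su‖_{2s} ≤ C'_s m^{N'_s} ‖u‖ for all u ∈ L². -/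
/-!
On the range of `S m` the rigid operator `B m - T m ^ 2` acts as multiplication by `m²`, since
`B m` kills it and `T m ^ 2 = -m²` there. The Gårding inequality therefore gains two Sobolev
derivatives at the cost of a polynomial factor in `m`, and iterating this `s` times from
`‖S m u‖ ≤ ‖u‖` bounds `‖S m u‖_{2s}` polynomially in `m`.
-/

def PolyDominated {α : Type*} (f g : ℕ → α → ℝ) : Prop :=
  ∃ C : ℝ, 0 < C ∧ ∃ N : ℕ, ∀ m : ℕ, 1 ≤ m → ∀ u : α, f m u ≤ C * (m : ℝ) ^ N * g m u

namespace PolyDominated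

variable {α : Type*} {f g h : ℕ → α → ℝ}

theorem of_le (hfg : ∀ m u, f m u ≤ g m u) : PolyDominated f g :=
  ⟨1, one_pos, 0, fun m _ u => by simpa using hfg m u⟩

theorem trans (hfg : PolyDominated f g) (hgh : PolyDominated g h) : PolyDominated f h := by
  obtain ⟨C, hC, N, hf⟩ := hfg
  obtain ⟨C', hC', N', hg⟩ := hgh
  refine ⟨C * C', mul_pos hC hC', N + N', fun m hm u => ?_⟩
  calc f m u ≤ C * (m : ℝ) ^ N * g m u := hf m hm u
    _ ≤ C * (m : ℝ) ^ N * (C' * (m : ℝ) ^ N' * h m u) := by gcongr; exact hg m hm u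
    _ = C * C' * (m : ℝ) ^ (N + N') * h m u := by ring

end PolyDominated

theorem sub_apply_eq_sq_smul_of_eigen {H : Type*} [AddCommGroup H] [Module ℂ H]
    (B T : H →ₗ[ℂ] H) (m : ℕ) {v : H} (hB : B v = 0)
    (hT : T (T v) = (-(m : ℂ) ^ 2) • v) :
    B v - T (T v) = ((m : ℂ) ^ 2) • v := by
  rw [hB, hT, zero_sub, neg_smul, neg_neg]

theorem polyDominated_of_garding {H : Type*} [AddCommGroup H] [Module ℂ H]
    (nrm : ℕ → H → ℝ)
    (hnonneg : ∀ (s : ℕ) (v : H), 0 ≤ nrm s v)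
    (hsmul : ∀ (s : ℕ) (c : ℂ) (v : H), nrm s (c • v) = ‖c‖ * nrm s v)
    (B T S : ℕ → H →ₗ[ℂ] H)
    (hBS : ∀ (m : ℕ) (u : H), B m (S m u) = 0)
    (hT2 : ∀ (m : ℕ) (u : H), T m (T m (S m u)) = (-(m : ℂ) ^ 2) • S m u)
    {s : ℕ} (hGarding : ∃ C : ℝ, 0 < C ∧ ∃ N : ℕ, ∀ m : ℕ, 1 ≤ m → ∀ u : H,
      nrm (s + 2) (S m u) ≤ C * (m : ℝ) ^ N *
        (nrm s (B m (S m u) - T m (T m (S m u))) + nrm s (S m u))) :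
    PolyDominated (fun m u => nrm (s + 2) (S m u)) (fun m u => nrm s (S m u)) := by
  obtain ⟨C, hC, N, hG⟩ := hGarding
  refine ⟨2 * C, by positivity, N + 2, fun m hm u => ?_⟩
  have hm' : (1 : ℝ) ≤ m := by exact_mod_cast hm
  have hrigid : nrm s (B m (S m u) - T m (T m (S m u))) = (m : ℝ) ^ 2 * nrm s (S m u) := by
    rw [sub_apply_eq_sq_smul_of_eigen _ _ m (hBS m u) (hT2 m u), hsmul, norm_pow,
      Complex.norm_natCast]
  calc nrm (s + 2) (S m u)
      ≤ C * (m : ℝ) ^ N * ((m : ℝ) ^ 2 * nrm s (S m u) + nrm s (S m u)) := by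
        simpa only [hrigid] using hG m hm u
    _ = C * (m : ℝ) ^ N * ((m : ℝ) ^ 2 + 1) * nrm s (S m u) := by ring
    _ ≤ C * (m : ℝ) ^ N * (2 * (m : ℝ) ^ 2) * nrm s (S m u) := by
        gcongr
        · exact hnonneg s _
        · nlinarith [hm']
    _ = 2 * C * (m : ℝ) ^ (N + 2) * nrm s (S m u) := by ring

theorem stmt_14_general {H : Type*} [NormedAddCommGroup H] [InnerProductSpace ℂ H]
    (nrm : ℕ → H → ℝ)
    (hnrm0 : ∀ v : H, nrm 0 v = ‖v‖)
    (hnonneg : ∀ (s : ℕ) (v : H), 0 ≤ nrm s v)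
    (hsmul : ∀ (s : ℕ) (c : ℂ) (v : H), nrm s (c • v) = ‖c‖ * nrm s v)
    (B T S : ℕ → H →ₗ[ℂ] H)
    (hBS : ∀ (m : ℕ) (u : H), B m (S m u) = 0)
    (hT2 : ∀ (m : ℕ) (u : H), T m (T m (S m u)) = (-(m : ℂ) ^ 2) • S m u)
    (hScontr : ∀ (m : ℕ) (u : H), ‖S m u‖ ≤ ‖u‖)
    (hGarding : ∀ s : ℕ, ∃ C : ℝ, 0 < C ∧ ∃ N : ℕ, ∀ m : ℕ, 1 ≤ m → ∀ u : H,
      nrm (s + 2) (S m u) ≤ C * (m : ℝ) ^ N *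
        (nrm s (B m (S m u) - T m (T m (S m u))) + nrm s (S m u))) :
    ∀ s : ℕ, ∃ C : ℝ, 0 < C ∧ ∃ N : ℕ, ∀ m : ℕ, 1 ≤ m → ∀ u : H,
      nrm (2 * s) (S m u) ≤ C * (m : ℝ) ^ N * ‖u‖ := by
  intro s
  change PolyDominated (fun m u => nrm (2 * s) (S m u)) (fun _ u => ‖u‖)
  induction s with
  | zero => exact .of_le fun m u => (hnrm0 _).trans_le (hScontr m u)
  | succ s ih =>
    exact (polyDominated_of_garding nrm hnonneg hsmul B T S hBS hT2 (hGarding (2 * s))).trans ih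

/-- Abstract Gårding/bootstrap estimate.  Given Sobolev-type seminorms
`nrm s`, kernel projections `S m` of operators `B m` commuting with `T m`, with
`T² S = -m² S` on the `m`-th Fourier component, `‖S u‖ ≤ ‖u‖`, and a Gårding
inequality `‖v‖_{s+2} ≤ C m^N (‖(B - T²)v‖_s + ‖v‖_s)` for `v` in the range of `S`
(constants independent of `m`), one obtains, for every `s`, constants `C', N'`
independent of `m` with `‖S u‖_{2s} ≤ C' m^{N'} ‖u‖`. -/
theorem stmt_14 {H : Type*} [NormedAddCommGroup H] [InnerProductSpace ℂ H]
    (nrm : ℕ → H → ℝ)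
    (hnrm0 : ∀ v : H, nrm 0 v = ‖v‖)
    (hnonneg : ∀ (s : ℕ) (v : H), 0 ≤ nrm s v)
    (hadd : ∀ (s : ℕ) (v w : H), nrm s (v + w) ≤ nrm s v + nrm s w)
    (hsmul : ∀ (s : ℕ) (c : ℂ) (v : H), nrm s (c • v) = ‖c‖ * nrm s v)
    (B T S : ℕ → H →ₗ[ℂ] H)
    (hBS : ∀ (m : ℕ) (u : H), B m (S m u) = 0)
    (hT2 : ∀ (m : ℕ) (u : H), T m (T m (S m u)) = (-(m : ℂ) ^ 2) • S m u)
    (hScontr : ∀ (m : ℕ) (u : H), ‖S m u‖ ≤ ‖u‖)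
    (hGarding : ∀ s : ℕ, ∃ C : ℝ, 0 < C ∧ ∃ N : ℕ, ∀ m : ℕ, 1 ≤ m → ∀ u : H,
      nrm (s + 2) (S m u) ≤ C * (m : ℝ) ^ N *
        (nrm s (B m (S m u) - T m (T m (S m u))) + nrm s (S m u))) :
    ∀ s : ℕ, ∃ C : ℝ, 0 < C ∧ ∃ N : ℕ, ∀ m : ℕ, 1 ≤ m → ∀ u : H,
      nrm (2 * s) (S m u) ≤ C * (m : ℝ) ^ N * ‖u‖ :=
  stmt_14_general nrm hnrm0 hnonneg hsmul B T S hBS hT2 hScontr hGarding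
end
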